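/- arXiv:2006.00970 — 2 statements merged into one kernel-verified Lean document; each statement's English description precedes it below -/
import Mathlib

section
/- Let u and v be distinct non-adjacent vertices of an LWF chain graph G, let H = (G_{An({u,v})})^m be the moral graph of the induced subgraph of G on the smallest ancestral set An({u,v}), and let S be the set of vertices adjacent to u in H. Then v ∉ S, S separates u from v in the undirected graph H (every path in H from u to v contains a vertex of S), and u and v are c-separated given S in G. -/
/- Formalization of LWF chain graphs, routes, sections, c-separation,
   minimal complexes, Markov blankets, moral graphs, and ancestral sets. -/

namespace LWF

/-- An LWF chain graph: a mixed graph with directed edges `dir` and (symmetric)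
undirected edges `undir`, no loops, no pair of vertices joined by more than one
edge, and no partially directed cycles. -/
structure ChainGraph (V : Type*) where
  dir : V → V → Prop
  undir : V → V → Prop
  undir_symm : ∀ u v, undir u v → undir v u
  dir_irrefl : ∀ v, ¬ dir v v
  undir_irrefl : ∀ v, ¬ undir v v
  dir_asymm : ∀ u v, dir u v → ¬ dir v u
  dir_not_undir : ∀ u v, dir u v → ¬ undir u v
  /-- No partially directed cycle: there is no sequence `ρ 0, …, ρ n` (`n ≥ 2`)
  with `ρ n = ρ 0`, the vertices `ρ 0, …, ρ (n-1)` distinct, every consecutive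
  pair joined by `dir` or `undir` (in the forward direction), and at least one
  forward directed edge on it. -/
  no_partially_directed_cycle :
    ∀ (n : ℕ) (ρ : ℕ → V), 2 ≤ n → ρ n = ρ 0 →
      (∀ i j, i < j → j < n → ρ i ≠ ρ j) →
      (∀ i, i < n → dir (ρ i) (ρ (i+1)) ∨ undir (ρ i) (ρ (i+1))) →
      ¬ ∃ i, i < n ∧ dir (ρ i) (ρ (i+1))

namespace ChainGraph

variable {V : Type*}

/-- Two vertices are adjacent if they are joined by a directed or an undirected edge. -/
def Adj (G : ChainGraph V) (u v : V) : Prop := G.dir u v ∨ G.dir v u ∨ G.undir u v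

/-- A partially directed path from `u` to `w`: a sequence of distinct vertices,
each consecutive pair joined by a forward directed or an undirected edge, with
at least one directed edge on it. -/
def PDPath (G : ChainGraph V) (u w : V) : Prop :=
  ∃ (n : ℕ) (ρ : ℕ → V), 1 ≤ n ∧ ρ 0 = u ∧ ρ n = w ∧
    (∀ i j, i ≤ n → j ≤ n → i ≠ j → ρ i ≠ ρ j) ∧
    (∀ i, i < n → G.dir (ρ i) (ρ (i+1)) ∨ G.undir (ρ i) (ρ (i+1))) ∧
    (∃ i, i < n ∧ G.dir (ρ i) (ρ (i+1)))

/-- `an(Z)`: the set of vertices having a partially directed path to some vertex of `Z`. -/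
def anc (G : ChainGraph V) (Z : Set V) : Set V := {x | ∃ z ∈ Z, G.PDPath x z}

/-- Parents of `v`. -/
def pa (G : ChainGraph V) (v : V) : Set V := {u | G.dir u v}

/-- Children of `v`. -/
def ch (G : ChainGraph V) (v : V) : Set V := {u | G.dir v u}

/-- Neighbours of `v`. -/
def nb (G : ChainGraph V) (v : V) : Set V := {u | G.undir u v}

/-- A minimal complex `a → ρ 1 − ⋯ − ρ n ← b` (with `ρ 0 = a`, `ρ (n+1) = b`,
`n ≥ 1`): all vertices distinct, the indicated edges present, and it is an
induced subgraph, i.e. the only adjacencies among its vertices are between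
consecutive ones (in particular `a` and `b` are non-adjacent). -/
def IsMinimalComplex (G : ChainGraph V) (a b : V) (n : ℕ) (ρ : ℕ → V) : Prop :=
  1 ≤ n ∧ ρ 0 = a ∧ ρ (n+1) = b ∧
  (∀ i j, i ≤ n+1 → j ≤ n+1 → i ≠ j → ρ i ≠ ρ j) ∧
  G.dir a (ρ 1) ∧ G.dir b (ρ n) ∧
  (∀ i, 1 ≤ i → i < n → G.undir (ρ i) (ρ (i+1))) ∧
  (∀ i j, i ≤ n+1 → j ≤ n+1 → G.Adj (ρ i) (ρ j) → j = i+1 ∨ i = j+1)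

/-- Complex-spouses of `a`. -/
def csp (G : ChainGraph V) (a : V) : Set V := {b | ∃ n ρ, G.IsMinimalComplex a b n ρ}

/-- The Markov blanket of `T`: parents, neighbours, children and complex-spouses of `T`. -/
def mb (G : ChainGraph V) (T : V) : Set V := G.pa T ∪ G.nb T ∪ G.ch T ∪ G.csp T

/-- A route in `G`: a sequence of `len + 1` vertices `vtx 0, …, vtx len`
(hence nonempty), each consecutive pair joined by an edge of `G`. -/
structure Route (G : ChainGraph V) where
  len : ℕ
  vtx : ℕ → V
  link : ∀ i, i < len → G.Adj (vtx i) (vtx (i+1))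

/-- The positions `a, …, b` of the route form a section: all steps inside are
undirected edges, and the run is maximal on both sides. -/
def Route.IsSection {G : ChainGraph V} (ω : Route G) (a b : ℕ) : Prop :=
  a ≤ b ∧ b ≤ ω.len ∧
  (∀ k, a ≤ k → k < b → G.undir (ω.vtx k) (ω.vtx (k+1))) ∧
  (0 < a → ¬ G.undir (ω.vtx (a-1)) (ω.vtx a)) ∧
  (b < ω.len → ¬ G.undir (ω.vtx b) (ω.vtx (b+1)))

/-- A collider section: a section which the route enters by an arrowhead at both
ends, i.e. `vtx (a-1) → vtx a − ⋯ − vtx b ← vtx (b+1)` occurs on the route. -/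
def Route.IsColliderSection {G : ChainGraph V} (ω : Route G) (a b : ℕ) : Prop :=
  ω.IsSection a b ∧ 0 < a ∧ b < ω.len ∧
  G.dir (ω.vtx (a-1)) (ω.vtx a) ∧ G.dir (ω.vtx (b+1)) (ω.vtx b)

/-- A route is active with respect to `Z` if every collider section of it
contains a vertex of `Z ∪ an(Z)` and no vertex of any non-collider section is in `Z`. -/
def Route.Active {G : ChainGraph V} (ω : Route G) (Z : Set V) : Prop :=
  (∀ a b, ω.IsColliderSection a b → ∃ k, a ≤ k ∧ k ≤ b ∧ ω.vtx k ∈ Z ∪ G.anc Z) ∧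
  (∀ a b, ω.IsSection a b → ¬ ω.IsColliderSection a b →
    ∀ k, a ≤ k → k ≤ b → ω.vtx k ∉ Z)

/-- A route is intercepted (blocked) by `Z` if it is not active with respect to `Z`. -/
def Route.Intercepted {G : ChainGraph V} (ω : Route G) (Z : Set V) : Prop :=
  ¬ ω.Active Z

/-- `X` and `Y` are c-separated given `Z`: every route between a vertex of `X`
and a vertex of `Y` is intercepted by `Z`. -/
def CSep (G : ChainGraph V) (X Y Z : Set V) : Prop :=
  ∀ ω : Route G,
    ((ω.vtx 0 ∈ X ∧ ω.vtx ω.len ∈ Y) ∨ (ω.vtx 0 ∈ Y ∧ ω.vtx ω.len ∈ X)) →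
    ω.Intercepted Z

/-- Moral graph adjacency: distinct `u`, `v` are adjacent in `G^m` iff they are
adjacent in `G` or are complex-spouses. -/
def MoralAdj (G : ChainGraph V) (u v : V) : Prop :=
  u ≠ v ∧ (G.dir u v ∨ G.dir v u ∨ G.undir u v ∨ u ∈ G.csp v ∨ v ∈ G.csp u)

/-- A set `A` is ancestral if it contains the boundary (parents and neighbours)
of each of its elements. -/
def Ancestral (G : ChainGraph V) (A : Set V) : Prop :=
  ∀ a ∈ A, ∀ u, (G.dir u a ∨ G.undir u a) → u ∈ A

/-- `An(A)`: the smallest ancestral set containing `A`. -/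
def An (G : ChainGraph V) (A : Set V) : Set V :=
  ⋂₀ {B : Set V | A ⊆ B ∧ G.Ancestral B}

/-- A minimal complex of the induced subgraph `G_A`: a minimal complex of `G`
all of whose vertices lie in `A`. -/
def IsMinimalComplexIn (G : ChainGraph V) (A : Set V) (a b : V) (n : ℕ) (ρ : ℕ → V) : Prop :=
  G.IsMinimalComplex a b n ρ ∧ ∀ i, i ≤ n+1 → ρ i ∈ A

/-- Adjacency in the moral graph `(G_A)^m` of the induced subgraph of `G` on `A`:
distinct `u, v ∈ A` joined by an edge of `G`, or complex-spouses in `G_A`. -/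
def MoralAdjIn (G : ChainGraph V) (A : Set V) (u v : V) : Prop :=
  u ∈ A ∧ v ∈ A ∧ u ≠ v ∧
    (G.dir u v ∨ G.dir v u ∨ G.undir u v ∨
      (∃ n ρ, G.IsMinimalComplexIn A u v n ρ) ∨ (∃ n ρ, G.IsMinimalComplexIn A v u n ρ))

end ChainGraph

/-- A path from `u` to `v` in an undirected graph with adjacency relation `R`:
a sequence of `n + 1 ≥ 2` distinct vertices `ρ 0 = u, …, ρ n = v` with each
consecutive pair adjacent. -/
def UPath {V : Type*} (R : V → V → Prop) (u v : V) (n : ℕ) (ρ : ℕ → V) : Prop :=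
  1 ≤ n ∧ ρ 0 = u ∧ ρ n = v ∧
  (∀ i j, i ≤ n → j ≤ n → i ≠ j → ρ i ≠ ρ j) ∧
  (∀ i, i < n → R (ρ i) (ρ (i+1)))

end LWF

/-!
Write `A = An({u, v})` and `S` for the neighbours of `u` in `(G_A)^m`. A minimal complex
`u → c₁ − ⋯ − cₙ ← v` inside `A` would close a partially directed cycle, because `c₁ ∈ A` has a
partially directed walk to `u` or to `v`; hence `v ∉ S`. A path of `(G_A)^m` leaves `u` through `S`.

For c-separation, take a route between `u` and `v` that is active given `S`. Its collider
sections meet `S ∪ an(S) ⊆ A`, and then the whole route lies in `A`: a route leaving the ancestral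
set `A` along an arrow must meet an arrowhead before it comes back. The two route vertices
flanking a collider section are equal or adjacent in `(G_A)^m`, since a shortest walk
`p → c₁ − ⋯ − cₘ ← q` inside `A` between non-adjacent `p`, `q` is a minimal complex: any chord
or repetition either shortens it or closes a partially directed cycle. Skipping the collider
sections therefore turns the route into a walk of `(G_A)^m` from `u` to `v` avoiding `S`,
whose first step from `u` would have to land in `S`.
-/

namespace LWF

open Relation

def IsWalk {α : Type*} (r : α → α → Prop) (x y : α) (n : ℕ) (ρ : ℕ → α) : Prop :=
  ρ 0 = x ∧ ρ n = y ∧ ∀ i < n, r (ρ i) (ρ (i + 1))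

namespace IsWalk

variable {α : Type*} {r : α → α → Prop} {x y : α} {n : ℕ} {ρ : ℕ → α}

theorem reflTransGen (h : IsWalk r x y n ρ) : ReflTransGen r x y := by
  obtain ⟨h0, hn, hstep⟩ := h
  have hprefix : ∀ i ≤ n, ReflTransGen r x (ρ i) := by
    intro i hi
    induction i with
    | zero => exact h0 ▸ .refl
    | succ i ih => exact (ih (by omega)).tail (hstep i (by omega))
  exact hn ▸ hprefix n le_rfl

theorem exists_of_reflTransGen (h : ReflTransGen r x y) : ∃ n ρ, IsWalk r x y n ρ := by
  induction h using Relation.ReflTransGen.head_induction_on with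
  | refl => exact ⟨0, fun _ => y, rfl, rfl, by omega⟩
  | @head x z hxz _ ih =>
    obtain ⟨n, ρ, h0, hn, hstep⟩ := ih
    refine ⟨n + 1, fun i => if i = 0 then x else ρ (i - 1), rfl, by simpa using hn, ?_⟩
    rintro (_ | i) hi
    · simpa [h0] using hxz
    · simpa using hstep i (by omega)

theorem splice (h : IsWalk r x y n ρ) {i j : ℕ} (hij : i < j) (hj : j ≤ n) (he : ρ i = ρ j) :
    IsWalk r x y (n - (j - i)) (fun k => if k ≤ i then ρ k else ρ (k + (j - i))) := by
  obtain ⟨h0, hn, hstep⟩ := h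
  refine ⟨by simpa using h0, ?_, fun k hk => ?_⟩
  · dsimp only
    split_ifs with h
    · rw [show n - (j - i) = i by omega, he, ← hn, show j = n by omega]
    · rwa [show n - (j - i) + (j - i) = n by omega]
  · dsimp only
    by_cases hki : k < i
    · rw [if_pos hki.le, if_pos (show k + 1 ≤ i by omega)]
      exact hstep k (by omega)
    · rw [if_neg (show ¬ k + 1 ≤ i by omega), show k + 1 + (j - i) = k + (j - i) + 1 by omega]
      split_ifs with h
      · rw [show k = i by omega, he, show i + (j - i) = j by omega]
        exact hstep j (by omega)
      · exact hstep _ (by omega)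

theorem exists_injective (h : IsWalk r x y n ρ) :
    ∃ m σ, IsWalk r x y m σ ∧ ∀ i ≤ m, ∀ j ≤ m, i ≠ j → σ i ≠ σ j := by
  induction n using Nat.strong_induction_on generalizing ρ with
  | _ n ih =>
  by_cases hinj : ∀ i ≤ n, ∀ j ≤ n, i ≠ j → ρ i ≠ ρ j
  · exact ⟨n, ρ, h, hinj⟩
  push Not at hinj
  obtain ⟨i, hi, j, hj, hne, he⟩ := hinj
  rcases hne.lt_or_gt with hlt | hlt
  · exact ih _ (by omega) (h.splice hlt hj he)
  · exact ih _ (by omega) (h.splice hlt hi he.symm)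

end IsWalk

namespace ChainGraph

variable {V : Type*} {G : ChainGraph V} {A Z : Set V} {a b x y : V} {n : ℕ} {ρ : ℕ → V}

def PDStep (G : ChainGraph V) (x y : V) : Prop := G.dir x y ∨ G.undir x y

theorem adj_symm (h : G.Adj x y) : G.Adj y x := by
  unfold Adj at *
  rcases h with h | h | h
  · exact .inr (.inl h)
  · exact .inl h
  · exact .inr (.inr (G.undir_symm _ _ h))

theorem adj_irrefl (x : V) : ¬ G.Adj x x := by
  rintro (h | h | h)
  · exact G.dir_irrefl x h
  · exact G.dir_irrefl x h
  · exact G.undir_irrefl x h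

theorem not_reflTransGen_of_dir (hxy : G.dir x y) : ¬ ReflTransGen G.PDStep y x := by
  intro h
  obtain ⟨n, ρ, ⟨h0, hn, hstep⟩, hinj⟩ :=
    (IsWalk.exists_of_reflTransGen h).elim fun n ⟨ρ, hρ⟩ => hρ.exists_injective
  have hn1 : 1 ≤ n := by
    rcases Nat.eq_zero_or_pos n with rfl | hn1
    · exact absurd (hn.symm.trans h0 ▸ hxy) (G.dir_irrefl y)
    · exact hn1
  -- close the walk `y ⇝ x` into a cycle by the edge `x → y`
  refine G.no_partially_directed_cycle (n + 1) (fun k => if k ≤ n then ρ k else y) (by omega)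
    (by simp [h0]) (fun i j hij hj => ?_) (fun i hi => ?_) ⟨n, by omega, ?_⟩
  · simpa [show i ≤ n by omega, show j ≤ n by omega] using hinj i (by omega) j (by omega) (by omega)
  · by_cases hin : i < n
    · simpa [hin.le, show i + 1 ≤ n by omega, PDStep] using hstep i hin
    · simpa [show i = n by omega, hn] using Or.inl hxy
  · simpa [hn] using hxy

theorem moralAdjIn_symm (h : G.MoralAdjIn A x y) : G.MoralAdjIn A y x := by
  obtain ⟨hx, hy, hne, h | h | h | h | h⟩ := h
  · exact ⟨hy, hx, hne.symm, .inr (.inl h)⟩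
  · exact ⟨hy, hx, hne.symm, .inl h⟩
  · exact ⟨hy, hx, hne.symm, .inr (.inr (.inl (G.undir_symm _ _ h)))⟩
  · exact ⟨hy, hx, hne.symm, .inr (.inr (.inr (.inr h)))⟩
  · exact ⟨hy, hx, hne.symm, .inr (.inr (.inr (.inl h)))⟩

theorem moralAdjIn_of_adj (hx : x ∈ A) (hy : y ∈ A) (h : G.Adj x y) : G.MoralAdjIn A x y := by
  refine ⟨hx, hy, fun he => G.adj_irrefl y (he ▸ h), ?_⟩
  unfold Adj at h
  tauto

def MoralAdjAvoiding (G : ChainGraph V) (A Z : Set V) (x y : V) : Prop :=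
  G.MoralAdjIn A x y ∧ x ∉ Z ∧ y ∉ Z

theorem reflTransGen_moralAdjAvoiding_symm
    (h : ReflTransGen (G.MoralAdjAvoiding A Z) x y) :
    ReflTransGen (G.MoralAdjAvoiding A Z) y x :=
  Relation.reflTransGen_swap.mp <| ReflTransGen.mono
    (fun _ _ ⟨hxy, hx, hy⟩ => ⟨moralAdjIn_symm hxy, hy, hx⟩) _ _ h

section Ancestral

theorem Ancestral.mem_of_reflTransGen (hA : G.Ancestral A)
    (h : ReflTransGen G.PDStep x y) (hy : y ∈ A) : x ∈ A := by
  induction h using Relation.ReflTransGen.head_induction_on with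
  | refl => exact hy
  | head hxz _ ih => exact hA _ ih _ hxz

theorem Ancestral.anc_subset (hA : G.Ancestral A) (hZ : Z ⊆ A) : G.anc Z ⊆ A := by
  rintro x ⟨z, hz, n, ρ, -, h0, hn, -, hstep, -⟩
  exact hA.mem_of_reflTransGen (IsWalk.reflTransGen ⟨h0, hn, hstep⟩) (hZ hz)

theorem Ancestral.mem_iff_of_undir (hA : G.Ancestral A) (h : G.undir x y) : x ∈ A ↔ y ∈ A :=
  ⟨fun hx => hA x hx y (.inr (G.undir_symm _ _ h)), fun hy => hA y hy x (.inr h)⟩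

theorem ancestral_An (A : Set V) : G.Ancestral (G.An A) :=
  fun a ha w hw B hB => hB.2 a (ha B hB) w hw

theorem subset_An (A : Set V) : A ⊆ G.An A := fun _ hx _ hB => hB.1 hx

theorem exists_reflTransGen_of_mem_An (hx : x ∈ G.An A) :
    ∃ a ∈ A, ReflTransGen G.PDStep x a :=
  hx {x | ∃ a ∈ A, ReflTransGen G.PDStep x a}
    ⟨fun a ha => ⟨a, ha, .refl⟩, fun _ ⟨a, ha, h⟩ _ hw => ⟨a, ha, h.head hw⟩⟩

end Ancestral

/-- `a → ρ 1 − ⋯ − ρ n ← b` inside `A`: a minimal complex of `G_A` without the requirements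
that its vertices be distinct and that it be an induced subgraph. -/
structure IsComplexWalk (G : ChainGraph V) (A : Set V) (a b : V) (n : ℕ) (ρ : ℕ → V) : Prop where
  one_le : 1 ≤ n
  first : ρ 0 = a
  last : ρ (n + 1) = b
  dir_first : G.dir a (ρ 1)
  dir_last : G.dir b (ρ n)
  undir : ∀ i, 1 ≤ i → i < n → G.undir (ρ i) (ρ (i + 1))
  mem : ∀ i ≤ n + 1, ρ i ∈ A

theorem IsMinimalComplexIn.isComplexWalk (h : G.IsMinimalComplexIn A a b n ρ) :
    G.IsComplexWalk A a b n ρ :=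
  let ⟨⟨hn, h0, hl, _, hd₁, hd₂, hu, _⟩, hA⟩ := h
  ⟨hn, h0, hl, hd₁, hd₂, hu, hA⟩

namespace IsComplexWalk

theorem reflTransGen (h : G.IsComplexWalk A a b n ρ) {i j : ℕ} (hi : 1 ≤ i) (hin : i ≤ n)
    (hj : 1 ≤ j) (hjn : j ≤ n) : ReflTransGen G.PDStep (ρ i) (ρ j) := by
  have key : ∀ k, 1 ≤ k → k ≤ n →
      ReflTransGen G.PDStep (ρ 1) (ρ k) ∧ ReflTransGen G.PDStep (ρ k) (ρ 1) := by
    intro k hk hkn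
    induction k with
    | zero => omega
    | succ k ih =>
      rcases Nat.eq_zero_or_pos k with rfl | hk0
      · exact ⟨.refl, .refl⟩
      · have hu := h.undir k hk0 (by omega)
        obtain ⟨h₁, h₂⟩ := ih hk0 (by omega)
        exact ⟨h₁.tail (.inr hu), h₂.head (.inr (G.undir_symm _ _ hu))⟩
  exact (key i hi hin).2.trans (key j hj hjn).1

theorem splice (h : G.IsComplexWalk A a b n ρ) {i d : ℕ} (hd : d < n) (hid : i + d ≤ n)
    (hfirst : i = 0 → G.dir a (ρ (d + 1))) (hlast : i + d = n → G.dir b (ρ i))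
    (hmid : 1 ≤ i → i + d < n → G.undir (ρ i) (ρ (i + d + 1))) :
    G.IsComplexWalk A a b (n - d) (fun k => if k ≤ i then ρ k else ρ (k + d)) where
  one_le := by omega
  first := by simp [h.first]
  last := by
    rw [if_neg (by omega), show n - d + 1 + d = n + 1 by omega, h.last]
  dir_first := by
    split_ifs with h₁
    · exact h.dir_first
    · rw [show 1 + d = d + 1 by omega]
      exact hfirst (by omega)
  dir_last := by
    split_ifs with h₁
    · rw [show n - d = i by omega]
      exact hlast (by omega)
    · rw [show n - d + d = n by omega]
      exact h.dir_last
  undir k hk₁ hk₂ := by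
    rcases lt_trichotomy k i with hki | rfl | hki
    · rw [if_pos hki.le, if_pos (show k + 1 ≤ i by omega)]
      exact h.undir k hk₁ (by omega)
    · rw [if_pos le_rfl, if_neg (by omega), show k + 1 + d = k + d + 1 by omega]
      exact hmid hk₁ (by omega)
    · rw [if_neg (by omega), if_neg (by omega), show k + 1 + d = k + d + 1 by omega]
      exact h.undir _ (by omega) (by omega)
  mem k hk := by
    split_ifs
    · exact h.mem k (by omega)
    · exact h.mem _ (by omega)

theorem vtx_ne_of_lt (h : G.IsComplexWalk A a b n ρ) (hab : a ≠ b)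
    (hmin : ∀ m < n, ∀ σ, ¬ G.IsComplexWalk A a b m σ) {i j : ℕ} (hij : i < j) (hj : j ≤ n + 1) :
    ρ i ≠ ρ j := by
  have hn := h.one_le
  intro he
  rcases Nat.eq_zero_or_pos i with rfl | hi
  · rcases (show j ≤ n ∨ j = n + 1 by omega) with hjn | rfl
    · exact not_reflTransGen_of_dir h.dir_first
        (h.first ▸ he ▸ h.reflTransGen le_rfl hn (by omega) hjn)
    · exact hab (h.first.symm.trans (he.trans h.last))
  · rcases (show j ≤ n ∨ j = n + 1 by omega) with hjn | rfl
    · refine hmin (n - (j - i)) (by omega) _ (h.splice (i := i) (d := j - i) (by omega) (by omega)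
        (by omega) (fun _ => ?_) (fun _ _ => ?_))
      · rw [he, show j = n by omega]
        exact h.dir_last
      · rw [he, show i + (j - i) + 1 = j + 1 by omega]
        exact h.undir j (by omega) (by omega)
    · exact not_reflTransGen_of_dir h.dir_last
        (h.last ▸ he ▸ h.reflTransGen hn le_rfl hi (by omega))

theorem not_adj_of_add_two_le (h : G.IsComplexWalk A a b n ρ) (hna : ¬ G.Adj a b)
    (hmin : ∀ m < n, ∀ σ, ¬ G.IsComplexWalk A a b m σ) {i j : ℕ} (hij : i + 2 ≤ j)
    (hj : j ≤ n + 1) : ¬ G.Adj (ρ i) (ρ j) := by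
  have hn := h.one_le
  have hra : ¬ ReflTransGen G.PDStep (ρ 1) a := not_reflTransGen_of_dir h.dir_first
  have hrb : ¬ ReflTransGen G.PDStep (ρ n) b := not_reflTransGen_of_dir h.dir_last
  intro hadj
  rcases Nat.eq_zero_or_pos i with rfl | hi
  · rw [h.first] at hadj
    rcases (show j ≤ n ∨ j = n + 1 by omega) with hjn | rfl
    · have hr := h.reflTransGen le_rfl hn (by omega) hjn
      rcases hadj with hd | hd | hu
      · refine hmin (n - (j - 1)) (by omega) _ (h.splice (i := 0) (d := j - 1) (by omega)
          (by omega) (fun _ => ?_) (by omega) (by omega))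
        rwa [show j - 1 + 1 = j by omega]
      · exact hra (hr.tail (.inl hd))
      · exact hra (hr.tail (.inr (G.undir_symm _ _ hu)))
    · exact hna (h.last ▸ hadj)
  · rcases (show j ≤ n ∨ j = n + 1 by omega) with hjn | rfl
    · rcases hadj with hd | hd | hu
      · exact not_reflTransGen_of_dir hd (h.reflTransGen (by omega) hjn hi (by omega))
      · exact not_reflTransGen_of_dir hd (h.reflTransGen hi (by omega) (by omega) hjn)
      · refine hmin (n - (j - i - 1)) (by omega) _ (h.splice (i := i) (d := j - i - 1) (by omega)
          (by omega) (by omega) (by omega) (fun _ _ => ?_))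
        rwa [show i + (j - i - 1) + 1 = j by omega]
    · rw [h.last] at hadj
      have hr := h.reflTransGen hn le_rfl hi (by omega)
      rcases hadj with hd | hd | hu
      · exact hrb (hr.tail (.inl hd))
      · exact hmin (n - (n - i)) (by omega) _ (h.splice (i := i) (d := n - i) (by omega)
          (by omega) (by omega) (fun _ => hd) (by omega))
      · exact hrb (hr.tail (.inr hu))

theorem isMinimalComplex (h : G.IsComplexWalk A a b n ρ) (hab : a ≠ b) (hna : ¬ G.Adj a b)
    (hmin : ∀ m < n, ∀ σ, ¬ G.IsComplexWalk A a b m σ) : G.IsMinimalComplex a b n ρ := by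
  refine ⟨h.one_le, h.first, h.last, fun i j hi hj hij => ?_, h.dir_first, h.dir_last, h.undir,
    fun i j hi hj hadj => ?_⟩
  · rcases hij.lt_or_gt with hlt | hlt
    · exact h.vtx_ne_of_lt hab hmin hlt hj
    · exact (h.vtx_ne_of_lt hab hmin hlt hi).symm
  · by_contra
    rcases lt_trichotomy i j with hlt | rfl | hlt
    · exact h.not_adj_of_add_two_le hna hmin (by omega) hj hadj
    · exact adj_irrefl _ hadj
    · exact h.not_adj_of_add_two_le hna hmin (by omega) hi (adj_symm hadj)

theorem moralAdjIn (h : G.IsComplexWalk A a b n ρ) (hab : a ≠ b) : G.MoralAdjIn A a b := by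
  induction n using Nat.strong_induction_on generalizing ρ with
  | _ n ih =>
  have ha : a ∈ A := h.first ▸ h.mem 0 (by omega)
  have hb : b ∈ A := h.last ▸ h.mem (n + 1) le_rfl
  by_cases hadj : G.Adj a b
  · exact moralAdjIn_of_adj ha hb hadj
  by_cases hmin : ∀ m < n, ∀ σ, ¬ G.IsComplexWalk A a b m σ
  · exact ⟨ha, hb, hab, .inr (.inr (.inr (.inl ⟨n, ρ, h.isMinimalComplex hab hadj hmin, h.mem⟩)))⟩
  push Not at hmin
  obtain ⟨m, hm, σ, hσ⟩ := hmin
  exact ih m hm hσ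

theorem not_An (h : G.IsComplexWalk (G.An {a, b}) a b n ρ) : False := by
  obtain ⟨c, hc, hrc⟩ := exists_reflTransGen_of_mem_An (h.mem 1 (by have := h.one_le; omega))
  rcases hc with rfl | rfl
  · exact not_reflTransGen_of_dir h.dir_first hrc
  · exact not_reflTransGen_of_dir h.dir_last
      ((h.reflTransGen h.one_le le_rfl le_rfl h.one_le).trans hrc)

end IsComplexWalk

theorem not_moralAdjIn_An (hna : ¬ G.Adj a b) : ¬ G.MoralAdjIn (G.An {a, b}) a b := by
  rintro ⟨-, -, -, h | h | h | ⟨n, ρ, hc⟩ | ⟨n, ρ, hc⟩⟩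
  · exact hna (.inl h)
  · exact hna (.inr (.inl h))
  · exact hna (.inr (.inr h))
  · exact hc.isComplexWalk.not_An
  · rw [Set.pair_comm] at hc
    exact hc.isComplexWalk.not_An

namespace Route

variable {ω : Route G} {i j k : ℕ}

def InColliderSection (ω : Route G) (k : ℕ) : Prop :=
  ∃ a b, ω.IsColliderSection a b ∧ a ≤ k ∧ k ≤ b

theorem exists_isSection (ω : Route G) (hk : k ≤ ω.len) :
    ∃ a b, ω.IsSection a b ∧ a ≤ k ∧ k ≤ b := by
  have left : ∀ k, ∃ a ≤ k, (∀ i, a ≤ i → i < k → G.undir (ω.vtx i) (ω.vtx (i + 1))) ∧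
      (0 < a → ¬ G.undir (ω.vtx (a - 1)) (ω.vtx a)) := by
    intro k
    induction k with
    | zero => exact ⟨0, le_rfl, by omega, by omega⟩
    | succ k ih =>
      by_cases hu : G.undir (ω.vtx k) (ω.vtx (k + 1))
      · obtain ⟨a, hak, hrun, hstop⟩ := ih
        refine ⟨a, by omega, fun i hai hik => ?_, hstop⟩
        rcases (show i < k ∨ i = k by omega) with hik | rfl
        exacts [hrun i hai hik, hu]
      · exact ⟨k + 1, le_rfl, by omega, fun _ => hu⟩
  have right : ∀ d k, k + d = ω.len → ∃ b ≥ k, b ≤ ω.len ∧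
      (∀ i, k ≤ i → i < b → G.undir (ω.vtx i) (ω.vtx (i + 1))) ∧
      (b < ω.len → ¬ G.undir (ω.vtx b) (ω.vtx (b + 1))) := by
    intro d
    induction d with
    | zero => exact fun k hk => ⟨k, le_rfl, by omega, by omega, by omega⟩
    | succ d ih =>
      intro k hk
      by_cases hu : G.undir (ω.vtx k) (ω.vtx (k + 1))
      · obtain ⟨b, hkb, hb, hrun, hstop⟩ := ih (k + 1) (by omega)
        refine ⟨b, by omega, hb, fun i hki hib => ?_, hstop⟩
        rcases (show i = k ∨ k + 1 ≤ i by omega) with rfl | hki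
        exacts [hu, hrun i hki hib]
      · exact ⟨k, le_rfl, by omega, by omega, fun _ => hu⟩
  obtain ⟨a, hak, hrunₗ, hstopₗ⟩ := left k
  obtain ⟨b, hkb, hb, hrunᵣ, hstopᵣ⟩ := right (ω.len - k) k (by omega)
  refine ⟨a, b, ⟨by omega, hb, fun i hai hib => ?_, hstopₗ, hstopᵣ⟩, hak, hkb⟩
  rcases (show i < k ∨ k ≤ i by omega) with hik | hki
  exacts [hrunₗ i hai hik, hrunᵣ i hki hib]

theorem isColliderSection_of (hab : i ≤ j) (hi : 0 < i) (hj : j < ω.len)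
    (hrun : ∀ k, i ≤ k → k < j → G.undir (ω.vtx k) (ω.vtx (k + 1)))
    (hleft : G.dir (ω.vtx (i - 1)) (ω.vtx i)) (hright : G.dir (ω.vtx (j + 1)) (ω.vtx j)) :
    ω.IsColliderSection i j :=
  ⟨⟨hab, hj.le, hrun, fun _ => G.dir_not_undir _ _ hleft,
    fun _ hu => G.dir_not_undir _ _ hright (G.undir_symm _ _ hu)⟩, hi, hj, hleft, hright⟩

theorem Active.not_mem (hact : ω.Active Z) (hk : k ≤ ω.len) (hc : ¬ ω.InColliderSection k) :
    ω.vtx k ∉ Z := by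
  obtain ⟨a, b, hs, hak, hkb⟩ := ω.exists_isSection hk
  exact hact.2 a b hs (fun hcol => hc ⟨a, b, hcol, hak, hkb⟩) k hak hkb

theorem IsColliderSection.not_inColliderSection_pred (h : ω.IsColliderSection i j) :
    ¬ ω.InColliderSection (i - 1) := by
  rintro ⟨a, b, hcol, ha, hb⟩
  obtain ⟨-, hi, -, hdir, -⟩ := h
  rcases (show i ≤ b ∨ b = i - 1 by omega) with hib | rfl
  · have hu := hcol.1.2.2.1 (i - 1) ha (by omega)
    rw [show i - 1 + 1 = i by omega] at hu
    exact G.dir_not_undir _ _ hdir hu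
  · have hdir' := hcol.2.2.2.2
    rw [show i - 1 + 1 = i by omega] at hdir'
    exact G.dir_asymm _ _ hdir hdir'

theorem IsColliderSection.isComplexWalk (h : ω.IsColliderSection i j)
    (hA : ∀ k ≤ ω.len, ω.vtx k ∈ A) :
    G.IsComplexWalk A (ω.vtx (i - 1)) (ω.vtx (j + 1)) (j - i + 1) (fun k => ω.vtx (i - 1 + k)) := by
  obtain ⟨⟨hij, -, hrun, -, -⟩, hi, hj, hleft, hright⟩ := h
  refine ⟨by omega, rfl, ?_, ?_, ?_, fun k hk₁ hk₂ => ?_, fun k hk => hA _ (by omega)⟩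
  · simp only [show i - 1 + (j - i + 1 + 1) = j + 1 by omega]
  · simpa [show i - 1 + 1 = i by omega] using hleft
  · simpa [show i - 1 + (j - i + 1) = j by omega] using hright
  · simpa [show i - 1 + (k + 1) = i - 1 + k + 1 by omega] using hrun _ (by omega) (by omega)

theorem IsSection.mem_iff (hA : G.Ancestral A) (hs : ω.IsSection i j) (hik : i ≤ k)
    (hkj : k ≤ j) : ω.vtx k ∈ A ↔ ω.vtx i ∈ A := by
  induction k with
  | zero => rw [show i = 0 by omega]
  | succ k ih =>
    rcases (show i = k + 1 ∨ i ≤ k by omega) with rfl | hik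
    · rfl
    · exact (hA.mem_iff_of_undir (hs.2.2.1 k hik (by omega))).symm.trans (ih hik (by omega))

/-- Having left `A` along an arrow, the route can only return to `A` (at its end, at the
latest) after meeting an arrowhead, which closes a collider section. -/
theorem exists_isColliderSection_not_mem (hA : G.Ancestral A) (hlen : ω.vtx ω.len ∈ A)
    {p : ℕ} (hpl : p < ω.len) (hdir : G.dir (ω.vtx p) (ω.vtx (p + 1))) (hp : ω.vtx (p + 1) ∉ A) :
    ∃ a b, ω.IsColliderSection a b ∧ ∀ k, a ≤ k → k ≤ b → ω.vtx k ∉ A := by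
  induction hd : ω.len - p using Nat.strong_induction_on generalizing p with
  | _ d ih =>
  obtain ⟨a, b, hs, ha, hb⟩ := ω.exists_isSection hpl
  obtain rfl : a = p + 1 := by
    by_contra hne
    exact G.dir_not_undir _ _ hdir (hs.2.2.1 p (by omega) (by omega))
  have hout : ∀ k, p + 1 ≤ k → k ≤ b → ω.vtx k ∉ A := fun k h₁ h₂ =>
    (hs.mem_iff hA h₁ h₂).not.mpr hp
  have hbl : b < ω.len := lt_of_le_of_ne hs.2.1 fun he => hout b hb le_rfl (he ▸ hlen)
  rcases ω.link b hbl with hfwd | hback | hu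
  · exact ih (ω.len - b) (by omega) hbl hfwd
      (fun hm => hout b hb le_rfl (hA _ hm _ (.inl hfwd))) rfl
  · exact ⟨p + 1, b, isColliderSection_of hb (by omega) hbl hs.2.2.1 hdir hback, hout⟩
  · exact absurd hu (hs.2.2.2.2 hbl)

theorem vtx_mem_of_ancestral (hA : G.Ancestral A) (h0 : ω.vtx 0 ∈ A) (hlen : ω.vtx ω.len ∈ A)
    (hcol : ∀ a b, ω.IsColliderSection a b → ∃ k, a ≤ k ∧ k ≤ b ∧ ω.vtx k ∈ A) :
    ∀ k ≤ ω.len, ω.vtx k ∈ A := by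
  intro k hk
  induction k with
  | zero => exact h0
  | succ k ih =>
    rcases ω.link k hk with hd | hd | hu
    · by_contra hnot
      obtain ⟨a, b, hcs, hout⟩ := exists_isColliderSection_not_mem hA hlen hk hd hnot
      obtain ⟨m, ham, hmb, hm⟩ := hcol a b hcs
      exact hout m ham hmb hm
    · exact hA _ (ih (by omega)) _ (.inl hd)
    · exact (hA.mem_iff_of_undir hu).mp (ih (by omega))

theorem reflTransGen_of_active (hact : ω.Active Z) (hA : ∀ k ≤ ω.len, ω.vtx k ∈ A) :
    ∀ k ≤ ω.len, ¬ ω.InColliderSection k →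
      ReflTransGen (G.MoralAdjAvoiding A Z) (ω.vtx 0) (ω.vtx k) := by
  intro k
  induction k using Nat.strong_induction_on with
  | _ k ih =>
  intro hk hc
  rcases k with _ | k
  · exact .refl
  by_cases hc' : ω.InColliderSection k
  · -- jump over the collider section ending at `k`, between its two parents on the route
    obtain ⟨a, b, hcs, hak, hkb⟩ := hc'
    obtain rfl : b = k := by
      by_contra hne
      exact hc ⟨a, b, hcs, by omega, by omega⟩
    have hpre := hcs.not_inColliderSection_pred
    refine (ih (a - 1) (by omega) (by omega) hpre).trans ?_
    by_cases he : ω.vtx (a - 1) = ω.vtx (b + 1)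
    · rw [he]
    · exact .single ⟨(hcs.isComplexWalk hA).moralAdjIn he, hact.not_mem (by omega) hpre,
        hact.not_mem hk hc⟩
  · exact (ih k (by omega) (by omega) hc').tail
      ⟨moralAdjIn_of_adj (hA k (by omega)) (hA _ hk) (ω.link k hk), hact.not_mem (by omega) hc',
        hact.not_mem hk hc⟩

end Route

theorem not_reflTransGen_moralAdjAvoiding {u v : V} (huv : u ≠ v) :
    ¬ ReflTransGen (G.MoralAdjAvoiding A {w | G.MoralAdjIn A u w}) u v := by
  intro h
  rcases h.cases_head with huv' | ⟨w, ⟨huw, -, hw⟩, -⟩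
  exacts [huv huv', hw huw]

end ChainGraph

theorem moral_neighbours_separate_general {V : Type*} (G : ChainGraph V)
    (u v : V) (huv : u ≠ v) (hna : ¬ G.Adj u v) :
    v ∉ {w | G.MoralAdjIn (G.An {u, v}) u w} ∧
    (∀ (n : ℕ) (ρ : ℕ → V), UPath (G.MoralAdjIn (G.An {u, v})) u v n ρ →
      ∃ i, i ≤ n ∧ ρ i ∈ {w | G.MoralAdjIn (G.An {u, v}) u w}) ∧
    G.CSep {u} {v} {w | G.MoralAdjIn (G.An {u, v}) u w} := by
  refine ⟨G.not_moralAdjIn_An hna, fun n ρ ⟨hn, h0, _, _, hstep⟩ => ⟨1, hn, h0 ▸ hstep 0 hn⟩, ?_⟩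
  intro ω hends hact
  set A := G.An {u, v}
  have hS : {w | G.MoralAdjIn A u w} ⊆ A := fun w hw => hw.2.1
  have huA : u ∈ A := G.subset_An _ (Set.mem_insert u {v})
  have hvA : v ∈ A := G.subset_An _ (Set.mem_insert_of_mem u rfl)
  have hends' : ω.vtx 0 ∈ A ∧ ω.vtx ω.len ∈ A := by
    rcases hends with ⟨h0, hl⟩ | ⟨h0, hl⟩
    · exact ⟨h0 ▸ huA, hl ▸ hvA⟩
    · exact ⟨h0 ▸ hvA, hl ▸ huA⟩
  have hA := ω.vtx_mem_of_ancestral (G.ancestral_An _) hends'.1 hends'.2 fun a b hcs => by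
    obtain ⟨k, hak, hkb, hk⟩ := hact.1 a b hcs
    exact ⟨k, hak, hkb, hk.elim (fun h => hS h) fun h => (G.ancestral_An _).anc_subset hS h⟩
  have hwalk := ω.reflTransGen_of_active hact hA ω.len le_rfl
    fun ⟨a, b, hcs, _, hb⟩ => by have := hcs.2.2.1; omega
  rcases hends with ⟨h0, hl⟩ | ⟨h0, hl⟩
  · exact G.not_reflTransGen_moralAdjAvoiding huv (h0 ▸ hl ▸ hwalk)
  · have hrev := ChainGraph.reflTransGen_moralAdjAvoiding_symm hwalk
    exact G.not_reflTransGen_moralAdjAvoiding huv (h0 ▸ hl ▸ hrev)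

/-- Let `u` and `v` be distinct non-adjacent vertices of an
LWF chain graph `G`, let `H = (G_{An({u,v})})^m`, and let `S` be the set of
vertices adjacent to `u` in `H`. Then `v ∉ S`, `S` separates `u` from `v` in
the undirected graph `H` (every path in `H` from `u` to `v` contains a vertex
of `S`), and `u` and `v` are c-separated given `S` in `G`. -/
theorem moral_neighbours_separate {V : Type*} [Fintype V] (G : ChainGraph V)
    (u v : V) (huv : u ≠ v) (hna : ¬ G.Adj u v) :
    v ∉ {w | G.MoralAdjIn (G.An {u, v}) u w} ∧
    (∀ (n : ℕ) (ρ : ℕ → V), UPath (G.MoralAdjIn (G.An {u, v})) u v n ρ →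
      ∃ i, i ≤ n ∧ ρ i ∈ {w | G.MoralAdjIn (G.An {u, v}) u w}) ∧
    G.CSep {u} {v} {w | G.MoralAdjIn (G.An {u, v}) u w} :=
  moral_neighbours_separate_general G u v huv hna

end LWF
end

section
/- Let G be an LWF chain graph, T ∈ V, and let S ⊆ V∖{T} be a set such that T is c-separated from every vertex of V∖({T}∪S) given S. Then Mb(T) ⊆ S. -/
/- Formalization of LWF chain graphs, routes, sections, c-separation,
   minimal complexes, Markov blankets, moral graphs, and ancestral sets. -/

namespace LWF

/-! If some `x ∈ Mb(T)` lay outside `S`, a route from `T` to a vertex outside `{T} ∪ S` would be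
active given `S`. For a parent, child or neighbour `x` it is the edge between `T` and `x`. For a
complex-spouse, with minimal complex `T → ρ 1 − ⋯ − ρ n ← x`: if the middle meets `S`, the whole
complex is active, its middle being a collider section containing a vertex of `S`; otherwise the
route `T → ρ 1 − ⋯ − ρ n` is partially directed, hence has no collider section, and avoids `S`. -/

namespace ChainGraph

variable {V : Type*} {G : ChainGraph V}

theorem Adj.ne {u v : V} (h : G.Adj u v) : u ≠ v := by
  rintro rfl
  rcases h with h | h | h
  exacts [G.dir_irrefl u h, G.dir_irrefl u h, G.undir_irrefl u h]

def Route.IsForward (ω : Route G) : Prop :=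
  ∀ i < ω.len, G.dir (ω.vtx i) (ω.vtx (i+1)) ∨ G.undir (ω.vtx i) (ω.vtx (i+1))

namespace Route

variable {ω : Route G} {Z : Set V} {a b a' b' : ℕ}

theorem IsSection.le_left_of_le (h₁ : ω.IsSection a b) (h₂ : ω.IsSection a' b')
    (h : a' ≤ b) : a' ≤ a := by
  by_contra! hlt
  have hstep := h₁.2.2.1 (a' - 1) (by omega) (by omega)
  rw [Nat.sub_add_cancel (by omega)] at hstep
  exact h₂.2.2.2.1 (by omega) hstep

theorem IsSection.le_right_of_le (h₁ : ω.IsSection a b) (h₂ : ω.IsSection a' b')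
    (h : a ≤ b') : b ≤ b' := by
  by_contra! hlt
  exact h₂.2.2.2.2 (by have := h₁.2.1; omega) (h₁.2.2.1 b' h hlt)

theorem IsSection.eq_of_overlap (h₁ : ω.IsSection a b) (h₂ : ω.IsSection a' b')
    (h : a' ≤ b) (h' : a ≤ b') : a = a' ∧ b = b' :=
  ⟨le_antisymm (h₂.le_left_of_le h₁ h') (h₁.le_left_of_le h₂ h),
    le_antisymm (h₁.le_right_of_le h₂ h') (h₂.le_right_of_le h₁ h)⟩

theorem IsForward.not_isColliderSection (hω : ω.IsForward) : ¬ ω.IsColliderSection a b := by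
  rintro ⟨_, _, hb, _, hdir⟩
  rcases hω b hb with h | h
  · exact G.dir_asymm _ _ h hdir
  · exact G.dir_not_undir _ _ hdir (G.undir_symm _ _ h)

theorem active_of_forall_not_mem (hcol : ∀ a b, ¬ ω.IsColliderSection a b)
    (hZ : ∀ k ≤ ω.len, ω.vtx k ∉ Z) : ω.Active Z :=
  ⟨fun a b h => absurd h (hcol a b), fun _ _ hsec _ _ _ hkb => hZ _ (hkb.trans hsec.2.1)⟩

theorem IsForward.active (hω : ω.IsForward) (hZ : ∀ k ≤ ω.len, ω.vtx k ∉ Z) : ω.Active Z :=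
  active_of_forall_not_mem (fun _ _ => hω.not_isColliderSection) hZ

def ofAdj {u v : V} (h : G.Adj u v) : Route G where
  len := 1
  vtx i := if i = 0 then u else v
  link i hi := by
    obtain rfl : i = 0 := by omega
    simpa using h

theorem ofAdj_active {u v : V} (h : G.Adj u v) (hu : u ∉ Z) (hv : v ∉ Z) :
    (ofAdj h).Active Z := by
  refine active_of_forall_not_mem (fun a b hcol => ?_) fun k _ => ?_
  · have := hcol.1.1
    have := hcol.2.1
    have := hcol.2.2.1
    simp only [ofAdj] at *
    omega
  · by_cases hk : k = 0 <;> simp [ofAdj, hk, hu, hv]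

end Route

namespace IsMinimalComplex

variable {a b : V} {n : ℕ} {ρ : ℕ → V} (h : G.IsMinimalComplex a b n ρ)
include h

theorem one_le : 1 ≤ n := h.1

theorem head_eq : ρ 0 = a := h.2.1

theorem last_eq : ρ (n+1) = b := h.2.2.1

theorem ne_of_ne {i j : ℕ} (hi : i ≤ n + 1) (hj : j ≤ n + 1) (hij : i ≠ j) : ρ i ≠ ρ j :=
  h.2.2.2.1 i j hi hj hij

theorem dir_head : G.dir (ρ 0) (ρ 1) := h.head_eq ▸ h.2.2.2.2.1

theorem dir_last : G.dir (ρ (n+1)) (ρ n) := h.last_eq ▸ h.2.2.2.2.2.1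

theorem undir_step {i : ℕ} (h1 : 1 ≤ i) (hi : i < n) : G.undir (ρ i) (ρ (i+1)) :=
  h.2.2.2.2.2.2.1 i h1 hi

def route : Route G where
  len := n + 1
  vtx := ρ
  link i hi := by
    by_cases hi0 : i = 0
    · subst hi0; exact Or.inl h.dir_head
    by_cases hin : i = n
    · subst hin; exact Or.inr (Or.inl h.dir_last)
    exact Or.inr (Or.inr (h.undir_step (by omega) (by omega)))

def headRoute : Route G where
  len := n
  vtx := ρ
  link i hi := h.route.link i (Nat.lt_succ_of_lt hi)

theorem headRoute_isForward : h.headRoute.IsForward := by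
  intro i hi
  by_cases hi0 : i = 0
  · subst hi0; exact Or.inl h.dir_head
  · exact Or.inr (h.undir_step (by omega) hi)

theorem route_isColliderSection : h.route.IsColliderSection 1 n :=
  ⟨⟨h.one_le, Nat.le_succ n, fun _ hk hkn => h.undir_step hk hkn,
      fun _ => G.dir_not_undir _ _ h.dir_head,
      fun _ hu => G.dir_not_undir _ _ h.dir_last (G.undir_symm _ _ hu)⟩,
    Nat.one_pos, Nat.lt_succ_self n, h.dir_head, h.dir_last⟩

-- The middle `ρ 1 − ⋯ − ρ n` is the only collider section of the route.
theorem route_active {Z : Set V} (hmid : ∃ k, 1 ≤ k ∧ k ≤ n ∧ ρ k ∈ Z) (ha : a ∉ Z)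
    (hb : b ∉ Z) : h.route.Active Z := by
  have hcol := h.route_isColliderSection
  obtain ⟨k, hk1, hkn, hkZ⟩ := hmid
  refine ⟨fun a' b' hcol' => ?_, fun a' b' hsec hncol j hj hjb hjZ => ?_⟩
  · have : 0 < a' ∧ a' ≤ b' ∧ b' < n + 1 := ⟨hcol'.2.1, hcol'.1.1, hcol'.2.2.1⟩
    obtain ⟨rfl, rfl⟩ := hcol'.1.eq_of_overlap hcol.1 (by omega) (by omega)
    exact ⟨k, hk1, hkn, Or.inl hkZ⟩
  · have : b' ≤ n + 1 := hsec.2.1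
    rcases Nat.eq_zero_or_pos j with rfl | hj0
    · exact ha (h.head_eq ▸ hjZ)
    by_cases hjn : j = n + 1
    · subst hjn; exact hb (h.last_eq ▸ hjZ)
    obtain ⟨rfl, rfl⟩ := hsec.eq_of_overlap hcol.1 (by omega) (by omega)
    exact hncol hcol

end IsMinimalComplex

end ChainGraph

open ChainGraph in
theorem mb_subset_separator_general {V : Type*} (G : ChainGraph V)
    (T : V) (S : Set V) (hT : T ∉ S)
    (hsep : G.CSep {T} (Set.univ \ ({T} ∪ S)) S) :
    G.mb T ⊆ S := by
  intro x hx
  by_contra hxS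
  have blocked (ω : Route G) (h0 : ω.vtx 0 = T) (hne : ω.vtx ω.len ≠ T)
      (hnS : ω.vtx ω.len ∉ S) : ¬ ω.Active S :=
    hsep ω (Or.inl ⟨h0, by simp [hne, hnS]⟩)
  have not_adj : ¬ G.Adj T x := fun hadj =>
    blocked (Route.ofAdj hadj) rfl hadj.ne.symm hxS (Route.ofAdj_active hadj hT hxS)
  rcases hx with ((hpa | hnb) | hch) | ⟨n, ρ, hc⟩
  · exact not_adj (Or.inr (Or.inl hpa))
  · exact not_adj (Or.inr (Or.inr (G.undir_symm _ _ hnb)))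
  · exact not_adj (Or.inl hch)
  by_cases hmid : ∃ k, 1 ≤ k ∧ k ≤ n ∧ ρ k ∈ S
  · refine blocked hc.route hc.head_eq ?_ (hc.last_eq ▸ hxS) (hc.route_active hmid hT hxS)
    exact hc.head_eq ▸ (hc.ne_of_ne (by omega) le_rfl (by omega)).symm
  · push Not at hmid
    refine blocked hc.headRoute hc.head_eq ?_ (hmid n hc.one_le le_rfl)
      (hc.headRoute_isForward.active fun k hk => ?_)
    · have := hc.one_le
      exact hc.head_eq ▸ (hc.ne_of_ne (i := 0) (j := n) (by omega) (by omega) (by omega)).symm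
    rcases Nat.eq_zero_or_pos k with rfl | hk0
    · exact hc.head_eq ▸ hT
    · exact hmid k hk0 hk

/-- If `S ⊆ V ∖ {T}` is a set such that `T` is c-separated
from every vertex of `V ∖ ({T} ∪ S)` given `S`, then `Mb(T) ⊆ S`. -/
theorem mb_subset_separator {V : Type*} [Fintype V] (G : ChainGraph V)
    (T : V) (S : Set V) (hT : T ∉ S)
    (hsep : G.CSep {T} (Set.univ \ ({T} ∪ S)) S) :
    G.mb T ⊆ S :=
  mb_subset_separator_general G T S hT hsep

end LWF
end
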